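/- arXiv:2201.06041 — 4 statements merged into one kernel-verified Lean document; each statement's English description precedes it below -/
import Mathlib

section
/- Let n ≥ 1, let A, B ∈ ℂ^{n×n}, let γ > 0 be real, and let α, β ∈ (−π, π) be real numbers with 0 < β − α ≤ π. Assume: (i) either ‖A‖ ≤ γ, or W(A) lies in the angular sector [α, β]; (ii) ‖B‖ < 1/γ; and (iii) there exist real numbers c ≤ d with d − c < π, −π − α < c, and d < π − β, such that W(B) lies in the angular sector [c, d]. Then the matrix I + A·B is invertible. -/
/-!
In the gain case `‖A B‖ ≤ ‖A‖ ‖B‖ < 1`, so `1 + A B` is invertible by the Neumann series.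
In the phase case, if `(1 + A B) x = 0` with `x ≠ 0`, put `y = B x`; then `A y = -x` and
`⟪y, A y⟫ ⟪x, B x⟫ = -|⟪x, B x⟫|²` is a non-positive real. But the two factors are positive
multiples of points of `W(A)` and `W(B)`, so their product lies in the sector `[α + c, β + d]`,
which is contained in `(-π, π)` and therefore contains no non-positive real.
-/

open scoped ComplexOrder Matrix

noncomputable section

/-- The numerical range `W(A)` of a complex `n × n` matrix. -/
def numRange {n : ℕ} (A : Matrix (Fin n) (Fin n) ℂ) : Set ℂ :=
  { z | ∃ x : EuclideanSpace ℂ (Fin n), ‖x‖ = 1 ∧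
      z = (inner ℂ x (Matrix.toEuclideanLin A x) : ℂ) }

/-- The operator norm (largest singular value) of a complex matrix. -/
def opNorm {n : ℕ} (A : Matrix (Fin n) (Fin n) ℂ) : ℝ :=
  ‖Matrix.toEuclideanCLM (𝕜 := ℂ) A‖

/-- A set `S ⊆ ℂ` lies in the angular sector `[a, b]`. -/
def inSector (a b : ℝ) (S : Set ℂ) : Prop :=
  ∀ z ∈ S, ∃ ρ θ : ℝ, 0 < ρ ∧ a ≤ θ ∧ θ ≤ b ∧ z = ρ * Complex.exp (θ * Complex.I)

open Matrix Real
open scoped Pointwise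

section Sector

variable {a b c d : ℝ} {S T : Set ℂ}

theorem inSector.mul (hS : inSector a b S) (hT : inSector c d T) :
    inSector (a + c) (b + d) (S * T) := by
  rintro _ ⟨z, hz, w, hw, rfl⟩
  obtain ⟨ρ, θ, hρ, haθ, hθb, rfl⟩ := hS z hz
  obtain ⟨σ, φ, hσ, hcφ, hφd, rfl⟩ := hT w hw
  refine ⟨ρ * σ, θ + φ, mul_pos hρ hσ, by linarith, by linarith, ?_⟩
  push_cast
  rw [add_mul, Complex.exp_add]
  ring

theorem inSector.ofReal_mul (hS : inSector a b S) {z : ℂ} (hz : z ∈ S) {r : ℝ} (hr : 0 < r) :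
    inSector a b {(r : ℂ) * z} := by
  rintro _ rfl
  obtain ⟨ρ, θ, hρ, haθ, hθb, rfl⟩ := hS z hz
  exact ⟨r * ρ, θ, mul_pos hr hρ, haθ, hθb, by push_cast; ring⟩

theorem inSector.neg_ofReal_notMem (hS : inSector a b S) (ha : -π < a) (hb : b < π) {r : ℝ}
    (hr : 0 ≤ r) : -(r : ℂ) ∉ S := by
  intro hmem
  obtain ⟨ρ, θ, hρ, haθ, hθb, h⟩ := hS _ hmem
  have hsin : ρ * Real.sin θ = 0 := by
    simpa [Complex.exp_ofReal_mul_I_im] using (congrArg Complex.im h).symm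
  rw [mul_eq_zero, Real.sin_eq_zero_iff_of_lt_of_lt (by linarith) (by linarith)] at hsin
  obtain hρ0 | rfl := hsin
  · exact hρ.ne' hρ0
  · have := congrArg Complex.re h
    simp only [Complex.neg_re, Complex.ofReal_re, Complex.ofReal_zero, zero_mul, Complex.exp_zero,
      mul_one] at this
    linarith

end Sector

theorem inSector.inner_toEuclideanLin {n : ℕ} {A : Matrix (Fin n) (Fin n) ℂ} {a b : ℝ}
    (hA : inSector a b (numRange A)) {x : EuclideanSpace ℂ (Fin n)} (hx : x ≠ 0) :
    inSector a b {inner ℂ x (toEuclideanLin A x)} := by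
  set u := (‖x‖ : ℂ)⁻¹ • x
  have hu : ‖u‖ = 1 := norm_smul_inv_norm hx
  have hxu : inner ℂ x (toEuclideanLin A x) =
      ((‖x‖ ^ 2 : ℝ) : ℂ) * inner ℂ u (toEuclideanLin A u) := by
    rw [map_smul, inner_smul_left, inner_smul_right, map_inv₀, Complex.conj_ofReal]
    push_cast
    field_simp
  rw [hxu]
  exact hA.ofReal_mul ⟨u, hu, rfl⟩ (by positivity)

theorem Matrix.exists_ne_zero_toEuclideanCLM_eq_zero_of_not_isUnit {ι 𝕜 : Type*} [Fintype ι]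
    [DecidableEq ι] [RCLike 𝕜] {M : Matrix ι ι 𝕜} (hM : ¬IsUnit M) :
    ∃ x : EuclideanSpace 𝕜 ι, x ≠ 0 ∧ toEuclideanCLM (𝕜 := 𝕜) M x = 0 := by
  rw [isUnit_iff_isUnit_det, isUnit_iff_ne_zero, not_not, ← exists_mulVec_eq_zero_iff] at hM
  obtain ⟨v, hv, hMv⟩ := hM
  exact ⟨WithLp.toLp 2 v, by simpa using hv, by simp [hMv]⟩

theorem isUnit_one_add_mul_of_opNorm_mul_lt_one {n : ℕ} {A B : Matrix (Fin n) (Fin n) ℂ}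
    (h : opNorm A * opNorm B < 1) : IsUnit (1 + A * B) := by
  rw [← isUnit_map_iff (toEuclideanCLM (n := Fin n) (𝕜 := ℂ)), map_add, map_one, map_mul,
    ← sub_neg_eq_add]
  apply isUnit_one_sub_of_norm_lt_one
  rw [norm_neg]
  exact (norm_mul_le _ _).trans_lt h

theorem isUnit_one_add_mul_of_inSector {n : ℕ} {A B : Matrix (Fin n) (Fin n) ℂ} {a b c d : ℝ}
    (hA : inSector a b (numRange A)) (hB : inSector c d (numRange B))
    (hlo : -π < a + c) (hhi : b + d < π) : IsUnit (1 + A * B) := by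
  by_contra hAB
  obtain ⟨x, hx, hker⟩ := exists_ne_zero_toEuclideanCLM_eq_zero_of_not_isUnit hAB
  set y := toEuclideanLin B x
  have hAy : toEuclideanLin A y = -x := by
    rw [map_add, map_one, map_mul] at hker
    exact eq_neg_of_add_eq_zero_right hker
  have hy : y ≠ 0 := by
    rintro h
    rw [h, map_zero, eq_comm, neg_eq_zero] at hAy
    exact hx hAy
  have hprod : inner ℂ y (toEuclideanLin A y) * inner ℂ x y =
      -((‖inner ℂ x y‖ ^ 2 : ℝ) : ℂ) := by
    rw [hAy, inner_neg_right, ← inner_conj_symm, neg_mul, mul_comm, Complex.mul_conj,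
      Complex.normSq_eq_norm_sq]
  have hsector := (hA.inner_toEuclideanLin hy).mul (hB.inner_toEuclideanLin hx)
  rw [Set.singleton_mul_singleton, hprod] at hsector
  exact hsector.neg_ofReal_notMem hlo hhi (sq_nonneg _) rfl

theorem mixed_gain_phase_matrix_invertible_general {n : ℕ}
    (A B : Matrix (Fin n) (Fin n) ℂ) (γ : ℝ) (hγ : 0 < γ)
    (α β : ℝ)
    (hA : opNorm A ≤ γ ∨ inSector α β (numRange A))
    (hBgain : opNorm B < 1 / γ)
    (hBphase : ∃ c d : ℝ, c ≤ d ∧ d - c < Real.pi ∧ -Real.pi - α < c ∧ d < Real.pi - β ∧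
      inSector c d (numRange B)) :
    IsUnit (1 + A * B) := by
  rcases hA with hAgain | hAphase
  · refine isUnit_one_add_mul_of_opNorm_mul_lt_one ?_
    calc opNorm A * opNorm B ≤ γ * opNorm B := by gcongr; exact norm_nonneg _
      _ < γ * (1 / γ) := by gcongr
      _ = 1 := mul_one_div_cancel hγ.ne'
  · obtain ⟨c, d, -, -, hc, hd, hBphase⟩ := hBphase
    exact isUnit_one_add_mul_of_inSector hAphase hBphase (by linarith) (by linarith)

/-- Mixed small-gain/small-phase matrix invertibility (paper's Lemma 3). -/
theorem mixed_gain_phase_matrix_invertible {n : ℕ} (hn : 1 ≤ n)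
    (A B : Matrix (Fin n) (Fin n) ℂ) (γ : ℝ) (hγ : 0 < γ)
    (α β : ℝ) (hα : -Real.pi < α) (hα' : α < Real.pi) (hβ : -Real.pi < β) (hβ' : β < Real.pi)
    (hαβ : 0 < β - α) (hαβ' : β - α ≤ Real.pi)
    (hA : opNorm A ≤ γ ∨ inSector α β (numRange A))
    (hBgain : opNorm B < 1 / γ)
    (hBphase : ∃ c d : ℝ, c ≤ d ∧ d - c < Real.pi ∧ -Real.pi - α < c ∧ d < Real.pi - β ∧
      inSector c d (numRange B)) :
    IsUnit (1 + A * B) :=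
  mixed_gain_phase_matrix_invertible_general A B γ hγ α β hA hBgain hBphase
end
end

section
/- Let n ≥ 1 and let A ∈ ℂ^{n×n} be accretive, i.e., A + A* is positive definite. Let θ ∈ [0, π/2) and write t := tan θ. Let A_h := (A + A*)/2 and A_s := (A − A*)/(2i). Suppose there exist unit vectors x₊ and x₋ in ℂⁿ with Im⟨x₊, A x₊⟩ > t·Re⟨x₊, A x₊⟩ and Im⟨x₋, A x₋⟩ < −t·Re⟨x₋, A x₋⟩ (strict feasibility of both phase branches). Define γ_θ(A) := sup{ ‖A x‖ : x ∈ ℂⁿ, ‖x‖ = 1, |Im⟨x, A x⟩| ≥ t·Re⟨x, A x⟩ }, g* := inf{ g ∈ ℝ : there exists τ ≥ 0 such that A*A − g·I + τ·(A_s − t·A_h) ⪯ 0 }, and h* := inf{ h ∈ ℝ : there exists τ ≥ 0 such that A*A − h·I + τ·(−A_s − t·A_h) ⪯ 0 }. Then both infima are over nonempty sets, g*, h* ≥ 0, and γ_θ(A) = max{ √g*, √h* }. -/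
/-!
The constraint `|Im⟨x, Ax⟩| ≥ t Re⟨x, Ax⟩` is the union of the two Hermitian constraints
`⟨x, Bx⟩ ≥ 0` with `B = ±A_s - t A_h`, so `γ_θ(A)` is the larger of the two gains of `A` on these
branches. On one branch, weak duality shows that every `g` with `A*A - gI + τB ⪯ 0`, `τ ≥ 0`,
bounds `‖Ax‖²`; conversely the S-lemma turns the bound `‖Ax‖² ≤ γ²‖x‖²` on `⟨x, Bx⟩ ≥ 0` into such a
certificate, thanks to the strictly feasible point. The S-lemma rests on Hausdorff's theorem:
`{⟨x, Tx⟩ : x ∈ ℂⁿ}` is a convex cone in `ℂ ≅ ℝ²`, so a point of it above the real axis and one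
below combine to a point on the axis, and this pins down the multiplier `τ`.
-/

open scoped ComplexOrder Matrix InnerProductSpace ComplexConjugate

theorem exists_norm_eq_one_mul_add_conj_mul_nonneg (c d : ℂ) :
    ∃ ω : ℂ, ‖ω‖ = 1 ∧ 0 ≤ ω * c + conj ω * d := by
  let f : ℝ → ℝ := fun φ ↦
    (Complex.exp (φ * Complex.I) * c + conj (Complex.exp (φ * Complex.I)) * d).im
  have hπ : f Real.pi = -f 0 := by
    simp only [Complex.add_im, Complex.mul_im, Complex.exp_ofReal_mul_I_re,
      Complex.exp_ofReal_mul_I_im, Complex.conj_re, Complex.conj_im, neg_mul, Real.cos_pi,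
      one_mul, Real.sin_pi, zero_mul, add_zero, neg_zero, Real.cos_zero, Real.sin_zero,
      neg_add_rev, f]
    ring
  have h0 : (0 : ℝ) ∈ Set.uIcc (f 0) (f Real.pi) := by
    rw [hπ, Set.mem_uIcc]
    rcases le_total (f 0) 0 with h | h
    · exact Or.inl ⟨h, by linarith⟩
    · exact Or.inr ⟨by linarith, h⟩
  obtain ⟨φ, -, hφ⟩ := intermediate_value_uIcc (by fun_prop : Continuous f).continuousOn h0
  set ω := Complex.exp (φ * Complex.I)
  have hω : ‖ω‖ = 1 := Complex.norm_exp_ofReal_mul_I φ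
  have him : (ω * c + conj ω * d).im = 0 := hφ
  rcases le_total 0 (ω * c + conj ω * d).re with hre | hre
  · exact ⟨ω, hω, Complex.nonneg_iff.2 ⟨hre, him.symm⟩⟩
  · have hneg : -ω * c + conj (-ω) * d = -(ω * c + conj ω * d) := by rw [map_neg]; ring
    refine ⟨-ω, by rwa [norm_neg], Complex.nonneg_iff.2 ⟨?_, ?_⟩⟩
    · rw [hneg, Complex.neg_re]; linarith
    · rw [hneg, Complex.neg_im, him, neg_zero]

theorem ConvexCone.exists_re_add_mul_im_nonpos (K : ConvexCone ℝ ℂ)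
    (hK : ∀ k ∈ K, 0 ≤ k.im → k.re ≤ 0) (h₀ : ∃ k ∈ K, 0 < k.im) :
    ∃ τ : ℝ, 0 ≤ τ ∧ ∀ k ∈ K, k.re + τ * k.im ≤ 0 := by
  set S := (fun k : ℂ ↦ -k.re / k.im) '' {k | k ∈ K ∧ 0 < k.im}
  obtain ⟨k₀, hk₀, hk₀im⟩ := h₀
  have hS : S.Nonempty := ⟨_, k₀, ⟨hk₀, hk₀im⟩, rfl⟩
  have hS0 : ∀ s ∈ S, 0 ≤ s := by
    rintro _ ⟨k, ⟨hk, him⟩, rfl⟩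
    exact div_nonneg (neg_nonneg.2 (hK k hk him.le)) him.le
  refine ⟨sInf S, le_csInf hS hS0, fun k hk ↦ ?_⟩
  rcases lt_trichotomy k.im 0 with him | him | him
  · -- a positive combination of `k` with a point `l` above the real axis lands on the real axis
    have hkS : -k.re / k.im ≤ sInf S := by
      refine le_csInf hS ?_
      rintro _ ⟨l, ⟨hl, hlim⟩, rfl⟩
      have hm := hK _ (K.add_mem (K.smul_mem hlim hk) (K.smul_mem (neg_pos.2 him) hl))
      simp only [Complex.add_im, Complex.add_re, Complex.real_smul, Complex.re_ofReal_mul,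
        Complex.im_ofReal_mul] at hm
      rw [neg_div, ← div_neg, div_le_div_iff₀ (neg_pos.2 him) hlim]
      nlinarith [hm (by ring_nf; rfl)]
    rw [div_le_iff_of_neg him] at hkS
    linarith
  · simpa [him] using hK k hk him.ge
  · have hkS : sInf S ≤ -k.re / k.im := csInf_le ⟨0, hS0⟩ ⟨k, ⟨hk, him⟩, rfl⟩
    rw [le_div_iff₀ him] at hkS
    linarith

section InnerProductSpace

variable {E : Type*} [NormedAddCommGroup E] [InnerProductSpace ℂ E]

theorem inner_map_self_ofReal_smul (T : E →ₗ[ℂ] E) (r : ℝ) (x : E) :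
    ⟪(r : ℂ) • x, T ((r : ℂ) • x)⟫_ℂ = (r ^ 2 : ℝ) * ⟪x, T x⟫_ℂ := by
  simp only [map_smul, inner_smul_left, inner_smul_right, Complex.conj_ofReal]
  push_cast
  ring

theorem inner_map_self_add_smul (T : E →ₗ[ℂ] E) {ω : ℂ} (hω : ‖ω‖ = 1) (x y : E) :
    ⟪x + ω • y, T (x + ω • y)⟫_ℂ =
      ⟪x, T x⟫_ℂ + ⟪y, T y⟫_ℂ + (ω * ⟪x, T y⟫_ℂ + conj ω * ⟪y, T x⟫_ℂ) := by
  have hωω : conj ω * ω = 1 := by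
    rw [mul_comm, Complex.mul_conj, Complex.normSq_eq_norm_sq, hω, one_pow, Complex.ofReal_one]
  simp only [map_add, map_smul, inner_add_left, inner_add_right, inner_smul_left,
    inner_smul_right]
  linear_combination ⟪y, T y⟫_ℂ * hωω

/-- Hausdorff: with `p = ⟪x, T x⟫ + ⟪y, T y⟫`, the phase `ω` can be chosen so that the cross term of
`x + ω y` is a nonnegative multiple of `p`; rescaling `x + ω y` then hits `p` exactly. -/
theorem exists_inner_map_self_eq_add (T : E →ₗ[ℂ] E) (x y : E) :
    ∃ z, ⟪z, T z⟫_ℂ = ⟪x, T x⟫_ℂ + ⟪y, T y⟫_ℂ := by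
  set p := ⟪x, T x⟫_ℂ + ⟪y, T y⟫_ℂ
  rcases eq_or_ne p 0 with hp | hp
  · exact ⟨0, by simp [hp]⟩
  obtain ⟨ω, hω, hr⟩ :=
    exists_norm_eq_one_mul_add_conj_mul_nonneg (⟪x, T y⟫_ℂ * conj p) (⟪y, T x⟫_ℂ * conj p)
  set e := ω * ⟪x, T y⟫_ℂ + conj ω * ⟪y, T x⟫_ℂ
  obtain ⟨r, hr0, her⟩ : ∃ r : ℝ, 0 ≤ r ∧ (r : ℂ) = e * conj p := by
    refine RCLike.nonneg_iff_exists_ofReal.1 ?_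
    convert hr using 1
    ring
  set c : ℝ := 1 + r / Complex.normSq p
  have hc : 0 < c := add_pos_of_pos_of_nonneg one_pos (div_nonneg hr0 (Complex.normSq_nonneg p))
  have hpe : p + e = c * p := by
    have hp' : conj p ≠ 0 := (map_ne_zero _).2 hp
    simp only [c]
    push_cast
    rw [← Complex.mul_conj, her]
    field_simp
  refine ⟨((√c⁻¹ : ℝ) : ℂ) • (x + ω • y), ?_⟩
  rw [inner_map_self_ofReal_smul, inner_map_self_add_smul T hω, hpe, Real.sq_sqrt (by positivity)]
  push_cast
  field_simp

def numericalCone (T : E →ₗ[ℂ] E) : ConvexCone ℝ ℂ where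
  carrier := Set.range fun x ↦ ⟪x, T x⟫_ℂ
  smul_mem' := by
    rintro r hr _ ⟨x, rfl⟩
    refine ⟨((√r : ℝ) : ℂ) • x, ?_⟩
    simp only [inner_map_self_ofReal_smul, Real.sq_sqrt hr.le, Complex.real_smul]
  add_mem' := by
    rintro _ ⟨x, rfl⟩ _ ⟨y, rfl⟩
    exact exists_inner_map_self_eq_add T x y

theorem s_lemma (P B : E →ₗ[ℂ] E) (hP : P.IsSymmetric) (hB : B.IsSymmetric)
    (h : ∀ x, 0 ≤ (⟪x, B x⟫_ℂ).re → (⟪x, P x⟫_ℂ).re ≤ 0) (h₀ : ∃ x, 0 < (⟪x, B x⟫_ℂ).re) :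
    ∃ τ : ℝ, 0 ≤ τ ∧ ∀ x, (⟪x, P x⟫_ℂ).re + τ * (⟪x, B x⟫_ℂ).re ≤ 0 := by
  have hre : ∀ x, (⟪x, (P + Complex.I • B) x⟫_ℂ).re = (⟪x, P x⟫_ℂ).re := fun x ↦ by
    simpa [inner_add_right, inner_smul_right] using hB.im_inner_self_apply x
  have him : ∀ x, (⟪x, (P + Complex.I • B) x⟫_ℂ).im = (⟪x, B x⟫_ℂ).re := fun x ↦ by
    simpa [inner_add_right, inner_smul_right] using hP.im_inner_self_apply x
  obtain ⟨τ, hτ, hK⟩ := (numericalCone (P + Complex.I • B)).exists_re_add_mul_im_nonpos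
    (by rintro _ ⟨x, rfl⟩; simpa only [hre, him] using h x)
    (let ⟨x, hx⟩ := h₀; ⟨_, ⟨x, rfl⟩, by simpa only [him] using hx⟩)
  exact ⟨τ, hτ, fun x ↦ by simpa only [hre, him] using hK _ ⟨x, rfl⟩⟩

def sProcedureBounds (A B : E →ₗ[ℂ] E) : Set ℝ :=
  {g | ∃ τ : ℝ, 0 ≤ τ ∧ ∀ x, ‖A x‖ ^ 2 + τ * (⟪x, B x⟫_ℂ).re ≤ g * ‖x‖ ^ 2}

theorem norm_sq_le_of_mem_sProcedureBounds {A B : E →ₗ[ℂ] E} {g : ℝ}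
    (hg : g ∈ sProcedureBounds A B) {x : E} (hx : ‖x‖ = 1) (hBx : 0 ≤ (⟪x, B x⟫_ℂ).re) :
    ‖A x‖ ^ 2 ≤ g := by
  obtain ⟨τ, hτ, h⟩ := hg
  have := h x
  rw [hx] at this
  nlinarith [mul_nonneg hτ hBx]

theorem mem_sProcedureBounds_of_forall_norm_sq_le [FiniteDimensional ℂ E] (A B : E →ₗ[ℂ] E)
    (hB : B.IsSymmetric) {g : ℝ} (hg : ∀ x, ‖x‖ = 1 → 0 ≤ (⟪x, B x⟫_ℂ).re → ‖A x‖ ^ 2 ≤ g)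
    (h₀ : ∃ x, 0 < (⟪x, B x⟫_ℂ).re) :
    g ∈ sProcedureBounds A B := by
  set P := LinearMap.adjoint A * A - (g : ℂ) • 1
  have hP : ∀ x, (⟪x, P x⟫_ℂ).re = ‖A x‖ ^ 2 - g * ‖x‖ ^ 2 := fun x ↦ by
    simp only [P, LinearMap.sub_apply, LinearMap.smul_apply, Module.End.mul_apply,
      Module.End.one_apply, inner_sub_right, inner_smul_right, LinearMap.adjoint_inner_right,
      inner_self_eq_norm_sq_to_K]
    simp [← Complex.ofReal_pow]
  have hPsymm : P.IsSymmetric := (LinearMap.isSymmetric_adjoint_mul_self A).sub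
    (LinearMap.IsSymmetric.one.smul (Complex.conj_ofReal g))
  have hPB : ∀ x, 0 ≤ (⟪x, B x⟫_ℂ).re → (⟪x, P x⟫_ℂ).re ≤ 0 := by
    intro x hBx
    rw [hP, sub_nonpos]
    rcases eq_or_ne x 0 with rfl | hx
    · simp
    have hx' : 0 < ‖x‖ := norm_pos_iff.2 hx
    have hu := hg (((‖x‖⁻¹ : ℝ) : ℂ) • x) (by simp [norm_smul, hx'.ne'])
      (by rw [inner_map_self_ofReal_smul, Complex.re_ofReal_mul]; positivity)
    rw [map_smul, norm_smul, Complex.norm_real, Real.norm_of_nonneg (by positivity), mul_pow,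
      inv_pow, inv_mul_le_iff₀ (by positivity)] at hu
    linarith
  obtain ⟨τ, hτ, h⟩ := s_lemma P B hPsymm hB hPB h₀
  exact ⟨τ, hτ, fun x ↦ by linarith [h x, hP x]⟩

theorem exists_isLUB_isLeast_sProcedureBounds [FiniteDimensional ℂ E] (A B : E →ₗ[ℂ] E)
    (hB : B.IsSymmetric) {x₀ : E} (hx₀ : ‖x₀‖ = 1) (h₀ : 0 < (⟪x₀, B x₀⟫_ℂ).re) :
    ∃ γ, 0 ≤ γ ∧ IsLUB ((fun x ↦ ‖A x‖) '' {x | ‖x‖ = 1 ∧ 0 ≤ (⟪x, B x⟫_ℂ).re}) γ ∧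
      IsLeast (sProcedureBounds A B) (γ ^ 2) := by
  set S := (fun x ↦ ‖A x‖) '' {x | ‖x‖ = 1 ∧ 0 ≤ (⟪x, B x⟫_ℂ).re}
  have hS₀ : ‖A x₀‖ ∈ S := ⟨x₀, ⟨hx₀, h₀.le⟩, rfl⟩
  have hSbdd : BddAbove S := by
    refine ⟨‖LinearMap.toContinuousLinearMap A‖, ?_⟩
    rintro _ ⟨x, ⟨hx, -⟩, rfl⟩
    simpa [hx] using (LinearMap.toContinuousLinearMap A).le_opNorm x
  have hγ := isLUB_csSup ⟨_, hS₀⟩ hSbdd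
  have hγ0 : 0 ≤ sSup S := (norm_nonneg _).trans (hγ.1 hS₀)
  refine ⟨sSup S, hγ0, hγ, ?_, fun g hg ↦ ?_⟩
  · refine mem_sProcedureBounds_of_forall_norm_sq_le A B hB (fun x hx hBx ↦ ?_) ⟨x₀, h₀⟩
    exact pow_le_pow_left₀ (norm_nonneg _) (hγ.1 ⟨x, ⟨hx, hBx⟩, rfl⟩) 2
  · have hg0 : 0 ≤ g := (sq_nonneg _).trans (norm_sq_le_of_mem_sProcedureBounds hg hx₀ h₀.le)
    rw [← Real.le_sqrt hγ0 hg0]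
    refine hγ.2 ?_
    rintro _ ⟨x, ⟨hx, hBx⟩, rfl⟩
    exact Real.le_sqrt_of_sq_le (norm_sq_le_of_mem_sProcedureBounds hg hx hBx)

end InnerProductSpace

namespace Matrix

variable {ι : Type*} [Fintype ι] [DecidableEq ι]

theorem inner_toEuclideanLin_conjTranspose (A : Matrix ι ι ℂ) (x : EuclideanSpace ℂ ι) :
    ⟪x, Aᴴ.toEuclideanLin x⟫_ℂ = conj ⟪x, A.toEuclideanLin x⟫_ℂ := by
  rw [toEuclideanLin_conjTranspose_eq_adjoint, LinearMap.adjoint_inner_right, inner_conj_symm]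

theorem inner_toEuclideanLin_hermitianPart (A : Matrix ι ι ℂ) (x : EuclideanSpace ℂ ι) :
    ⟪x, ((2 : ℂ)⁻¹ • (A + Aᴴ)).toEuclideanLin x⟫_ℂ = (⟪x, A.toEuclideanLin x⟫_ℂ).re := by
  rw [Complex.re_eq_add_conj, ← inner_toEuclideanLin_conjTranspose, map_smul, map_add,
    LinearMap.smul_apply, LinearMap.add_apply, inner_smul_right, inner_add_right]
  ring

theorem inner_toEuclideanLin_skewHermitianPart (A : Matrix ι ι ℂ) (x : EuclideanSpace ℂ ι) :
    ⟪x, ((2 * Complex.I)⁻¹ • (A - Aᴴ)).toEuclideanLin x⟫_ℂ = (⟪x, A.toEuclideanLin x⟫_ℂ).im := by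
  rw [Complex.im_eq_sub_conj, ← inner_toEuclideanLin_conjTranspose, map_smul, map_sub,
    LinearMap.smul_apply, LinearMap.sub_apply, inner_smul_right, inner_sub_right]
  ring

theorem isHermitian_of_im_inner_toEuclideanLin (M : Matrix ι ι ℂ)
    (hM : ∀ x, (⟪x, M.toEuclideanLin x⟫_ℂ).im = 0) : M.IsHermitian := by
  refine isSymmetric_toEuclideanLin_iff.1 ((LinearMap.isSymmetric_iff_inner_map_self_real _).2 ?_)
  intro x
  rw [← inner_conj_symm, Complex.conj_conj]
  exact (Complex.conj_eq_iff_im.2 (hM x)).symm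

theorem setOf_posSemidef_eq_sProcedureBounds (A B : Matrix ι ι ℂ) (hB : B.IsHermitian) :
    {g : ℝ | ∃ τ : ℝ, 0 ≤ τ ∧ (-(Aᴴ * A - (g : ℂ) • 1 + (τ : ℂ) • B)).PosSemidef} =
      sProcedureBounds A.toEuclideanLin B.toEuclideanLin := by
  ext g
  refine exists_congr fun τ ↦ and_congr_right fun _ ↦ ?_
  have hM : (-(Aᴴ * A - (g : ℂ) • 1 + (τ : ℂ) • B)).IsHermitian :=
    (((isHermitian_conjTranspose_mul_self A).sub
      (isHermitian_one.smul (Complex.conj_ofReal g))).add (hB.smul (Complex.conj_ofReal τ))).neg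
  rw [← isPositive_toEuclideanLin_iff, LinearMap.IsPositive, isSymmetric_toEuclideanLin_iff,
    and_iff_right hM]
  refine forall_congr' fun x ↦ ?_
  rw [inner_re_symm]
  simp only [map_neg, map_add, map_sub, map_smul, toLpLin_mul_same, toLpLin_one,
    LinearMap.neg_apply, LinearMap.add_apply, LinearMap.sub_apply, LinearMap.smul_apply,
    LinearMap.comp_apply, LinearMap.id_apply, inner_neg_right, inner_add_right, inner_sub_right,
    inner_smul_right]
  rw [toEuclideanLin_conjTranspose_eq_adjoint, LinearMap.adjoint_inner_right,
    inner_self_eq_norm_sq_to_K, inner_self_eq_norm_sq_to_K]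
  simp only [Complex.coe_algebraMap, ← Complex.ofReal_pow, RCLike.re_to_complex,
    Complex.ofReal_re, RCLike.mul_re, RCLike.im_to_complex, Complex.ofReal_im, mul_zero, sub_zero,
    zero_mul, neg_add_rev, neg_sub, le_neg_add_iff_add_le, add_zero]
  rw [le_sub_iff_add_le, add_comm]

theorem exists_isLUB_isLeast_setOf_posSemidef (A B : Matrix ι ι ℂ) (hB : B.IsHermitian)
    {x₀ : EuclideanSpace ℂ ι} (hx₀ : ‖x₀‖ = 1) (h₀ : 0 < (⟪x₀, B.toEuclideanLin x₀⟫_ℂ).re) :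
    ∃ γ, 0 ≤ γ ∧
      IsLUB ((fun x ↦ ‖A.toEuclideanLin x‖) '' {x | ‖x‖ = 1 ∧ 0 ≤ (⟪x, B.toEuclideanLin x⟫_ℂ).re})
        γ ∧
      IsLeast {g : ℝ | ∃ τ : ℝ, 0 ≤ τ ∧ (-(Aᴴ * A - (g : ℂ) • 1 + (τ : ℂ) • B)).PosSemidef}
        (γ ^ 2) := by
  rw [setOf_posSemidef_eq_sProcedureBounds A B hB]
  exact exists_isLUB_isLeast_sProcedureBounds _ _ (isSymmetric_toEuclideanLin_iff.2 hB) hx₀ h₀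

end Matrix

theorem constrained_gain_sdp_general {n : ℕ}
    (A : Matrix (Fin n) (Fin n) ℂ)
    (θ : ℝ)
    (xp xm : EuclideanSpace ℂ (Fin n)) (hxp : ‖xp‖ = 1) (hxm : ‖xm‖ = 1)
    (hfeasp : Real.tan θ * (inner ℂ xp (Matrix.toEuclideanLin A xp) : ℂ).re <
      (inner ℂ xp (Matrix.toEuclideanLin A xp) : ℂ).im)
    (hfeasm : (inner ℂ xm (Matrix.toEuclideanLin A xm) : ℂ).im <
      -(Real.tan θ * (inner ℂ xm (Matrix.toEuclideanLin A xm) : ℂ).re)) :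
    let t : ℝ := Real.tan θ
    let Ah : Matrix (Fin n) (Fin n) ℂ := ((2 : ℂ))⁻¹ • (A + Aᴴ)
    let As : Matrix (Fin n) (Fin n) ℂ := ((2 * Complex.I))⁻¹ • (A - Aᴴ)
    let γ : ℝ := sSup { g : ℝ | ∃ x : EuclideanSpace ℂ (Fin n), ‖x‖ = 1 ∧
      t * (inner ℂ x (Matrix.toEuclideanLin A x) : ℂ).re ≤
        |(inner ℂ x (Matrix.toEuclideanLin A x) : ℂ).im| ∧
      g = ‖Matrix.toEuclideanLin A x‖ }
    let Sg : Set ℝ := { g | ∃ τ : ℝ, 0 ≤ τ ∧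
      (-(Aᴴ * A - (g : ℂ) • 1 + (τ : ℂ) • (As - (t : ℂ) • Ah))).PosSemidef }
    let Sh : Set ℝ := { h | ∃ τ : ℝ, 0 ≤ τ ∧
      (-(Aᴴ * A - (h : ℂ) • 1 + (τ : ℂ) • (-As - (t : ℂ) • Ah))).PosSemidef }
    Sg.Nonempty ∧ Sh.Nonempty ∧ 0 ≤ sInf Sg ∧ 0 ≤ sInf Sh ∧
      γ = max (Real.sqrt (sInf Sg)) (Real.sqrt (sInf Sh)) := by
  intro t Ah As γ Sg Sh
  set q : EuclideanSpace ℂ (Fin n) → ℂ := fun x ↦ ⟪x, A.toEuclideanLin x⟫_ℂ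
  have hBp : ∀ x, ⟪x, (As - (t : ℂ) • Ah).toEuclideanLin x⟫_ℂ = ((q x).im - t * (q x).re : ℝ) :=
    fun x ↦ by
      rw [map_sub, LinearMap.sub_apply, inner_sub_right,
        Matrix.inner_toEuclideanLin_skewHermitianPart, map_smul, LinearMap.smul_apply,
        inner_smul_right, Matrix.inner_toEuclideanLin_hermitianPart]
      push_cast; rfl
  have hBm : ∀ x, ⟪x, (-As - (t : ℂ) • Ah).toEuclideanLin x⟫_ℂ = (-(q x).im - t * (q x).re : ℝ) :=
    fun x ↦ by
      rw [map_sub, map_neg, LinearMap.sub_apply, LinearMap.neg_apply, inner_sub_right,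
        inner_neg_right, Matrix.inner_toEuclideanLin_skewHermitianPart, map_smul,
        LinearMap.smul_apply, inner_smul_right, Matrix.inner_toEuclideanLin_hermitianPart]
      push_cast; rfl
  obtain ⟨γp, hγp0, hγp, hSg⟩ := Matrix.exists_isLUB_isLeast_setOf_posSemidef A _
    (Matrix.isHermitian_of_im_inner_toEuclideanLin _ fun x ↦ by rw [hBp, Complex.ofReal_im]) hxp
    (by rw [hBp, Complex.ofReal_re]; linarith)
  obtain ⟨γm, hγm0, hγm, hSh⟩ := Matrix.exists_isLUB_isLeast_setOf_posSemidef A _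
    (Matrix.isHermitian_of_im_inner_toEuclideanLin _ fun x ↦ by rw [hBm, Complex.ofReal_im]) hxm
    (by rw [hBm, Complex.ofReal_re]; linarith)
  have hγ : IsLUB _ (max γp γm) := hγp.union hγm
  rw [← Set.image_union] at hγ
  refine ⟨hSg.nonempty, hSh.nonempty, hSg.csInf_eq ▸ sq_nonneg _, hSh.csInf_eq ▸ sq_nonneg _, ?_⟩
  simp only [γ, Sg, Sh]
  rw [hSg.csInf_eq, hSh.csInf_eq, Real.sqrt_sq hγp0, Real.sqrt_sq hγm0,
    ← hγ.csSup_eq ⟨_, xp, Or.inl ⟨hxp, by rw [hBp, Complex.ofReal_re]; linarith⟩, rfl⟩]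
  congr 1
  ext g
  simp only [Set.mem_ofPred_eq, Set.mem_image, Set.mem_union, hBp, hBm, Complex.ofReal_re,
    sub_nonneg, le_abs]
  refine exists_congr fun x ↦ ?_
  rw [eq_comm (a := g)]
  tauto

/-- Paper's Proposition 4: SDP computation of the constrained gain `γ_θ(A)` of an
accretive matrix `A`. -/
theorem constrained_gain_sdp {n : ℕ} (hn : 1 ≤ n)
    (A : Matrix (Fin n) (Fin n) ℂ) (hacc : (A + Aᴴ).PosDef)
    (θ : ℝ) (hθ0 : 0 ≤ θ) (hθ : θ < Real.pi / 2)
    (xp xm : EuclideanSpace ℂ (Fin n)) (hxp : ‖xp‖ = 1) (hxm : ‖xm‖ = 1)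
    (hfeasp : Real.tan θ * (inner ℂ xp (Matrix.toEuclideanLin A xp) : ℂ).re <
      (inner ℂ xp (Matrix.toEuclideanLin A xp) : ℂ).im)
    (hfeasm : (inner ℂ xm (Matrix.toEuclideanLin A xm) : ℂ).im <
      -(Real.tan θ * (inner ℂ xm (Matrix.toEuclideanLin A xm) : ℂ).re)) :
    let t : ℝ := Real.tan θ
    let Ah : Matrix (Fin n) (Fin n) ℂ := ((2 : ℂ))⁻¹ • (A + Aᴴ)
    let As : Matrix (Fin n) (Fin n) ℂ := ((2 * Complex.I))⁻¹ • (A - Aᴴ)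
    let γ : ℝ := sSup { g : ℝ | ∃ x : EuclideanSpace ℂ (Fin n), ‖x‖ = 1 ∧
      t * (inner ℂ x (Matrix.toEuclideanLin A x) : ℂ).re ≤
        |(inner ℂ x (Matrix.toEuclideanLin A x) : ℂ).im| ∧
      g = ‖Matrix.toEuclideanLin A x‖ }
    let Sg : Set ℝ := { g | ∃ τ : ℝ, 0 ≤ τ ∧
      (-(Aᴴ * A - (g : ℂ) • 1 + (τ : ℂ) • (As - (t : ℂ) • Ah))).PosSemidef }
    let Sh : Set ℝ := { h | ∃ τ : ℝ, 0 ≤ τ ∧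
      (-(Aᴴ * A - (h : ℂ) • 1 + (τ : ℂ) • (-As - (t : ℂ) • Ah))).PosSemidef }
    Sg.Nonempty ∧ Sh.Nonempty ∧ 0 ≤ sInf Sg ∧ 0 ≤ sInf Sh ∧
      γ = max (Real.sqrt (sInf Sg)) (Real.sqrt (sInf Sh)) :=
  constrained_gain_sdp_general A θ xp xm hxp hxm hfeasp hfeasm
end

section
/- Let n ≥ 1 and A, B ∈ ℂ^{n×n}, with B sectorial (0 ∉ W(B)). Suppose there exist a real number r ≥ 0 and real numbers a ≤ b with b − a ≤ π and c ≤ d with d − c < π such that: (i) W_{≥r}(A) lies in the angular sector [a, b]; (ii) W(B) lies in the angular sector [c, d]; (iii) b + d < π and a + c > −π; and (iv) ‖B‖ · r < 1. Then the matrix I + A·B is invertible. -/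
open scoped ComplexOrder Matrix

noncomputable section

/-- The vertically projected Davis–Wielandt shell `W_{≥r}(A)`. -/
def wShell {n : ℕ} (A : Matrix (Fin n) (Fin n) ℂ) (r : ℝ) : Set ℂ :=
  { z | ∃ x : EuclideanSpace ℂ (Fin n), ‖x‖ = 1 ∧ r ≤ ‖Matrix.toEuclideanLin A x‖ ∧
      z = (inner ℂ x (Matrix.toEuclideanLin A x) : ℂ) }

/-!
If `(1 + A * B) x = 0` with `x ≠ 0`, put `y = B x`, so that `A y = -x`. Then
`⟪y, A y⟫ * ⟪x, B x⟫ = -conj ⟪x, y⟫ * ⟪x, y⟫ = -‖⟪x, y⟫‖²` is a nonpositive real. The gain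
condition gives `‖A y‖ = ‖x‖ ≥ r ‖y‖`, so after normalisation the two factors lie in `W_{≥r}(A)`
and `W(B)`; their phases then add up to an angle in `(-π, π)`, which puts the product off the
closed negative real axis.
-/

open Complex Matrix Real
open scoped InnerProductSpace

theorem Complex.ofReal_mul_exp_mul_I_mem_slitPlane {ρ α : ℝ} (hρ : 0 < ρ)
    (hα : α ∈ Set.Ioo (-π) π) : ρ * exp (α * I) ∈ slitPlane := by
  have harg : arg (ρ * exp (α * I)) = α := by
    rw [exp_mul_I, arg_mul_cos_add_sin_mul_I hρ ⟨hα.1, hα.2.le⟩]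
  rw [mem_slitPlane_iff_arg, harg]
  exact ⟨hα.2.ne, mul_ne_zero (ofReal_ne_zero.2 hρ.ne') (exp_ne_zero _)⟩

theorem inSector.mul_mem_slitPlane {a b c d : ℝ} {S T : Set ℂ} (hS : inSector a b S)
    (hT : inSector c d T) (hlo : -π < a + c) (hhi : b + d < π) {z w : ℂ} (hz : z ∈ S)
    (hw : w ∈ T) : z * w ∈ slitPlane := by
  obtain ⟨ρ, θ, hρ, haθ, hθb, rfl⟩ := hS z hz
  obtain ⟨σ, φ, hσ, hcφ, hφd, rfl⟩ := hT w hw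
  have hpolar : ρ * exp (θ * I) * (σ * exp (φ * I)) = ↑(ρ * σ) * exp (↑(θ + φ) * I) := by
    push_cast
    rw [add_mul, Complex.exp_add]
    ring
  rw [hpolar]
  exact ofReal_mul_exp_mul_I_mem_slitPlane (mul_pos hρ hσ) ⟨by linarith, by linarith⟩

theorem inner_neg_mul_inner_nonpos {E : Type*} [NormedAddCommGroup E] [InnerProductSpace ℂ E]
    (x y : E) : ⟪y, -x⟫_ℂ * ⟪x, y⟫_ℂ ≤ 0 := by
  rw [inner_neg_right, ← inner_conj_symm, neg_mul, conj_mul', neg_nonpos]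
  exact_mod_cast sq_nonneg ‖⟪x, y⟫_ℂ‖

theorem Matrix.isUnit_of_toEuclideanLin_injective {𝕜 ι : Type*} [RCLike 𝕜] [Fintype ι]
    [DecidableEq ι] {M : Matrix ι ι 𝕜} (h : ∀ x, toEuclideanLin M x = 0 → x = 0) :
    IsUnit M :=
  (isUnit_map_iff (toLpLinAlgEquiv 2) M).mp
    ((LinearMap.isUnit_iff_ker_eq_bot _).mpr (LinearMap.ker_eq_bot'.mpr h))

theorem Matrix.toEuclideanLin_one_add_mul_apply {𝕜 ι : Type*} [RCLike 𝕜] [Fintype ι]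
    [DecidableEq ι] (A B : Matrix ι ι 𝕜) (x : EuclideanSpace 𝕜 ι) :
    toEuclideanLin (1 + A * B) x = x + toEuclideanLin A (toEuclideanLin B x) := by
  simp

section

variable {n : ℕ} (M : Matrix (Fin n) (Fin n) ℂ)

theorem norm_toEuclideanLin_apply_le (x : EuclideanSpace ℂ (Fin n)) :
    ‖toEuclideanLin M x‖ ≤ opNorm M * ‖x‖ :=
  (toEuclideanCLM (𝕜 := ℂ) M).le_opNorm x

theorem numRange_eq_wShell_zero : numRange M = wShell M 0 := by
  ext z
  simp [numRange, wShell]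

variable {M}

theorem mem_wShell_of_ne_zero {r : ℝ} {x : EuclideanSpace ℂ (Fin n)} (hx : x ≠ 0)
    (hr : r * ‖x‖ ≤ ‖toEuclideanLin M x‖) :
    (((‖x‖ ^ 2)⁻¹ : ℝ) : ℂ) * ⟪x, toEuclideanLin M x⟫_ℂ ∈ wShell M r := by
  have hxpos : 0 < ‖x‖ := norm_pos_iff.2 hx
  refine ⟨((‖x‖⁻¹ : ℝ) : ℂ) • x, ?_, ?_, ?_⟩
  · simp [norm_smul, hxpos.ne']
  · rw [map_smul, norm_smul, norm_real, norm_inv, norm_norm, ← div_eq_inv_mul,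
      le_div_iff₀ hxpos]
    exact hr
  · simp only [map_smul, inner_smul_left, inner_smul_right, conj_ofReal]
    push_cast
    ring

theorem mem_numRange_of_ne_zero {x : EuclideanSpace ℂ (Fin n)} (hx : x ≠ 0) :
    (((‖x‖ ^ 2)⁻¹ : ℝ) : ℂ) * ⟪x, toEuclideanLin M x⟫_ℂ ∈ numRange M :=
  numRange_eq_wShell_zero M ▸ mem_wShell_of_ne_zero hx (by simp)

end

theorem dw_mixed_invertible_general {n : ℕ}
    (A B : Matrix (Fin n) (Fin n) ℂ)
    (r : ℝ) (hr : 0 ≤ r) (a b : ℝ)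
    (c d : ℝ)
    (hA : inSector a b (wShell A r))
    (hB : inSector c d (numRange B))
    (hbd : b + d < Real.pi) (hac : -Real.pi < a + c)
    (hgain : opNorm B * r < 1) :
    IsUnit (1 + A * B) := by
  refine isUnit_of_toEuclideanLin_injective fun x hx => ?_
  by_contra hx0
  rw [toEuclideanLin_one_add_mul_apply] at hx
  set y := toEuclideanLin B x
  have hAy : toEuclideanLin A y = -x := eq_neg_of_add_eq_zero_right hx
  have hy0 : y ≠ 0 := fun hy => hx0 (by simpa [hy] using hAy)
  have hgain_y : r * ‖y‖ ≤ ‖toEuclideanLin A y‖ := by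
    rw [hAy, norm_neg]
    nlinarith [norm_toEuclideanLin_apply_le B x, norm_nonneg x]
  have hprod := hA.mul_mem_slitPlane hB hac hbd (mem_wShell_of_ne_zero hy0 hgain_y)
    (mem_numRange_of_ne_zero hx0)
  refine mem_slitPlane_iff_not_le_zero.1 hprod ?_
  rw [hAy, mul_mul_mul_comm, ← ofReal_mul]
  exact mul_nonpos_of_nonneg_of_nonpos (zero_le_real.2 (by positivity))
    (inner_neg_mul_inner_nonpos x y)

/-- Paper's Theorem 4: mixed constrained-phase / gain invertibility via the
Davis–Wielandt shell. -/
theorem dw_mixed_invertible {n : ℕ} (hn : 1 ≤ n)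
    (A B : Matrix (Fin n) (Fin n) ℂ) (hBsect : (0 : ℂ) ∉ numRange B)
    (r : ℝ) (hr : 0 ≤ r) (a b : ℝ) (hab : a ≤ b) (hab' : b - a ≤ Real.pi)
    (c d : ℝ) (hcd : c ≤ d) (hcd' : d - c < Real.pi)
    (hA : inSector a b (wShell A r))
    (hB : inSector c d (numRange B))
    (hbd : b + d < Real.pi) (hac : -Real.pi < a + c)
    (hgain : opNorm B * r < 1) :
    IsUnit (1 + A * B) :=
  dw_mixed_invertible_general A B r hr a b c d hA hB hbd hac hgain
end
end

section
/- Let n ≥ 1 and A, B ∈ ℂ^{n×n}, with A and B both sectorial (0 ∉ W(A) and 0 ∉ W(B)). Suppose there exists θ ∈ [0, π) such that: (i) for every unit vector x ∈ ℂⁿ for which ⟨x, A x⟩ cannot be written as ρ·e^{iφ} with ρ > 0 and φ ∈ (−θ, θ), one has ‖A x‖ · ‖B‖ < 1; and (ii) there exist real numbers c ≤ d with d − c < π, −π + θ < c, and d < π − θ such that W(B) lies in the angular sector [c, d]. Then the matrix I + A·B is invertible. -/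
open scoped ComplexOrder Matrix

noncomputable section

/-!
If `(1 + A B) x = 0` for a unit vector `x`, then `y = B x` is nonzero and `u = y / ‖y‖` satisfies
`A u = -x / ‖y‖`, hence `⟪u, A u⟫ = -conj ⟪x, B x⟫ / ‖y‖²`. As `⟪x, B x⟫` has argument in
`(-π + θ, π - θ)`, this value has argument in `(θ, 2π - θ)`, so the gain condition applies to `u`
and gives `‖B‖ / ‖y‖ < 1`, contradicting `‖y‖ ≤ ‖B‖`.
-/

open Complex ComplexConjugate InnerProductSpace

def inOpenSector (θ : ℝ) (z : ℂ) : Prop :=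
  ∃ ρ φ : ℝ, 0 < ρ ∧ -θ < φ ∧ φ < θ ∧ z = ρ * exp (φ * I)

theorem exists_eq_add_int_mul_two_pi_of_ofReal_mul_exp_eq {ρ ρ' φ φ' : ℝ} (hρ : 0 < ρ)
    (hρ' : 0 < ρ') (h : (ρ : ℂ) * exp (φ * I) = ρ' * exp (φ' * I)) :
    ∃ k : ℤ, φ = φ' + k * (2 * Real.pi) := by
  have hρρ' : ρ = ρ' := by
    simpa [abs_of_pos hρ, abs_of_pos hρ'] using congrArg (‖·‖) h
  subst hρρ'
  obtain ⟨k, hk⟩ := exp_eq_exp_iff_exists_int.mp (mul_left_cancel₀ (ofReal_ne_zero.mpr hρ.ne') h)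
  exact ⟨k, by simpa using congrArg im hk⟩

theorem neg_mul_conj_ofReal_mul_exp (r ρ ψ : ℝ) :
    -((r : ℂ) * conj ((ρ : ℂ) * exp (ψ * I))) = ↑(r * ρ) * exp (↑(Real.pi - ψ) * I) := by
  rw [map_mul, conj_ofReal, ← exp_conj, map_mul, conj_ofReal, conj_I]
  push_cast
  rw [sub_mul, exp_sub, exp_pi_mul_I, mul_neg, exp_neg]
  field_simp

theorem not_inOpenSector_neg_mul_conj {θ r : ℝ} {z : ℂ} (hr : 0 < r)
    (hz : inOpenSector (Real.pi - θ) z) : ¬ inOpenSector θ (-(r * conj z)) := by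
  obtain ⟨ρ, ψ, hρ, hψ₁, hψ₂, rfl⟩ := hz
  rintro ⟨ρ', φ, hρ', hφ₁, hφ₂, h⟩
  rw [neg_mul_conj_ofReal_mul_exp] at h
  obtain ⟨k, hk⟩ := exists_eq_add_int_mul_two_pi_of_ofReal_mul_exp_eq hρ' (mul_pos hr hρ) h.symm
  -- `2πk = φ + ψ - π` with `φ + ψ ∈ (-π, π)`
  have hπ := Real.pi_pos
  have hk₁ : (-1 : ℝ) < k := by nlinarith
  have hk₂ : (k : ℝ) < 0 := by nlinarith
  have : (-1 : ℤ) < k ∧ k < 0 := ⟨by exact_mod_cast hk₁, by exact_mod_cast hk₂⟩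
  omega

section Operator

variable {E : Type*} [NormedAddCommGroup E] [InnerProductSpace ℂ E] {a b : E →L[ℂ] E} {θ : ℝ}

theorem apply_apply_ne_neg_of_gain_of_phase
    (hgain : ∀ x : E, ‖x‖ = 1 → ¬ inOpenSector θ ⟪x, a x⟫_ℂ → ‖a x‖ * ‖b‖ < 1)
    (hphase : ∀ x : E, ‖x‖ = 1 → inOpenSector (Real.pi - θ) ⟪x, b x⟫_ℂ)
    {x : E} (hx : ‖x‖ = 1) : a (b x) ≠ -x := by
  intro hab
  set y := b x
  have hy : y ≠ 0 := by
    rintro hy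
    rw [hy, map_zero, eq_comm, neg_eq_zero] at hab
    simp [hab] at hx
  set u := (‖y‖⁻¹ : ℂ) • y
  have hau : a u = -((‖y‖⁻¹ : ℂ) • x) := by simp only [u, map_smul, hab, smul_neg]
  have hinner : ⟪u, a u⟫_ℂ = -((‖y‖⁻¹ ^ 2 : ℝ) * conj ⟪x, y⟫_ℂ) := by
    rw [hau, inner_neg_right, inner_smul_left, inner_smul_right, inner_conj_symm]
    simp only [map_inv₀, conj_ofReal]
    push_cast
    ring
  have hsector : ¬ inOpenSector θ ⟪u, a u⟫_ℂ :=
    hinner ▸ not_inOpenSector_neg_mul_conj (by positivity) (hphase x hx)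
  have hnorm : ‖a u‖ = ‖y‖⁻¹ := by
    rw [hau, norm_neg, norm_smul, hx, mul_one, norm_inv, norm_real, norm_norm]
  have hyb : ‖y‖ ≤ ‖b‖ := by simpa [hx] using b.le_opNorm x
  have hlt := hgain u (norm_smul_inv_norm hy) hsector
  rw [hnorm, inv_mul_lt_one₀ (norm_pos_iff.mpr hy)] at hlt
  exact hlt.not_ge hyb

theorem injective_one_add_mul_of_gain_of_phase
    (hgain : ∀ x : E, ‖x‖ = 1 → ¬ inOpenSector θ ⟪x, a x⟫_ℂ → ‖a x‖ * ‖b‖ < 1)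
    (hphase : ∀ x : E, ‖x‖ = 1 → inOpenSector (Real.pi - θ) ⟪x, b x⟫_ℂ) :
    Function.Injective ⇑(1 + a * b) := by
  rw [injective_iff_map_eq_zero]
  intro x hx
  by_contra hx0
  have hab : a (b x) = -x := eq_neg_of_add_eq_zero_right hx
  refine apply_apply_ne_neg_of_gain_of_phase hgain hphase (norm_smul_inv_norm (𝕜 := ℂ) hx0) ?_
  rw [map_smul, map_smul, hab, smul_neg]

end Operator

theorem ContinuousLinearMap.isUnit_of_injective {𝕜 E : Type*} [NontriviallyNormedField 𝕜]
    [CompleteSpace 𝕜] [NormedAddCommGroup E] [NormedSpace 𝕜 E] [FiniteDimensional 𝕜 E]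
    {f : E →L[𝕜] E} (hf : Function.Injective f) : IsUnit f :=
  have := FiniteDimensional.complete 𝕜 E
  f.isUnit_iff_bijective.2 ⟨hf, LinearMap.injective_iff_surjective.1 hf⟩

theorem dw_constrained_gain_invertible_general {n : ℕ}
    (A B : Matrix (Fin n) (Fin n) ℂ)
    (θ : ℝ)
    (hgain : ∀ x : EuclideanSpace ℂ (Fin n), ‖x‖ = 1 →
      (¬ ∃ ρ φ : ℝ, 0 < ρ ∧ -θ < φ ∧ φ < θ ∧
          (inner ℂ x (Matrix.toEuclideanLin A x) : ℂ) = ρ * Complex.exp (φ * Complex.I)) →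
      ‖Matrix.toEuclideanLin A x‖ * opNorm B < 1)
    (hphase : ∃ c d : ℝ, c ≤ d ∧ d - c < Real.pi ∧ -Real.pi + θ < c ∧ d < Real.pi - θ ∧
      inSector c d (numRange B)) :
    IsUnit (1 + A * B) := by
  obtain ⟨c, d, -, -, hc, hd, hB⟩ := hphase
  rw [← isUnit_map_iff (Matrix.toEuclideanCLM (n := Fin n) (𝕜 := ℂ)), map_add, map_one, map_mul]
  -- `hgain` fits as it stands: `inOpenSector` unfolds to its sector condition, and
  -- `toEuclideanCLM A` coerces to `toEuclideanLin A` by definition.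
  refine ContinuousLinearMap.isUnit_of_injective
    (injective_one_add_mul_of_gain_of_phase hgain fun x hx => ?_)
  obtain ⟨ρ, ψ, hρ, hcψ, hψd, h⟩ := hB _ ⟨x, hx, rfl⟩
  exact ⟨ρ, ψ, hρ, by linarith, by linarith, h⟩

/-- Paper's Theorem 5: mixed constrained-gain / phase invertibility via the
Davis–Wielandt shell. -/
theorem dw_constrained_gain_invertible {n : ℕ} (hn : 1 ≤ n)
    (A B : Matrix (Fin n) (Fin n) ℂ)
    (hAsect : (0 : ℂ) ∉ numRange A) (hBsect : (0 : ℂ) ∉ numRange B)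
    (θ : ℝ) (hθ0 : 0 ≤ θ) (hθ : θ < Real.pi)
    (hgain : ∀ x : EuclideanSpace ℂ (Fin n), ‖x‖ = 1 →
      (¬ ∃ ρ φ : ℝ, 0 < ρ ∧ -θ < φ ∧ φ < θ ∧
          (inner ℂ x (Matrix.toEuclideanLin A x) : ℂ) = ρ * Complex.exp (φ * Complex.I)) →
      ‖Matrix.toEuclideanLin A x‖ * opNorm B < 1)
    (hphase : ∃ c d : ℝ, c ≤ d ∧ d - c < Real.pi ∧ -Real.pi + θ < c ∧ d < Real.pi - θ ∧
      inSector c d (numRange B)) :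
    IsUnit (1 + A * B) :=
  dw_constrained_gain_invertible_general A B θ hgain hphase
end
end
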